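/- arXiv:1611.02001 — 2 statements merged into one kernel-verified Lean document; each statement's English description precedes it below -/
import Mathlib

section
/- If A is an N×N real strictly row diagonally dominant matrix with positive diagonal entries, then det(A) > 0. -/
open Finset

lemma dd_det_ne_zero (N : ℕ) (A : Matrix (Fin N) (Fin N) ℝ)
    (hdiag : ∀ i, 0 < A i i)
    (hdom : ∀ i, ∑ j ∈ Finset.univ \ {i}, |A i j| < A i i) :
    A.det ≠ 0 := by
  intro hdet
  obtain ⟨v, hv, hAv⟩ := (Matrix.exists_mulVec_eq_zero_iff).2 hdet
  have hN : Nonempty (Fin N) := by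
    by_contra h
    exact hv (funext fun i => absurd ⟨i⟩ h)
  obtain ⟨i, -, hi⟩ := Finset.exists_max_image Finset.univ (fun i => |v i|)
    ⟨Classical.arbitrary (Fin N), Finset.mem_univ _⟩
  have hvi : 0 < |v i| := by
    rcases (abs_nonneg (v i)).lt_or_eq with h | h
    · exact h
    · exfalso; apply hv; funext j
      have h2 := hi j (Finset.mem_univ j)
      have : |v j| = 0 := le_antisymm (by linarith) (abs_nonneg _)
      simpa [abs_eq_zero] using this
  have h0 : ∑ j, A i j * v j = 0 := congrFun hAv i
  have hsplit : A i i * v i + ∑ j ∈ Finset.univ \ {i}, A i j * v j = 0 := by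
    rw [← h0, ← Finset.sum_sdiff (Finset.subset_univ {i}), Finset.sum_singleton]
    ring
  have h1 : A i i * |v i| = |∑ j ∈ Finset.univ \ {i}, A i j * v j| := by
    rw [← abs_of_pos (hdiag i), ← abs_mul]
    have h : A i i * v i = -(∑ j ∈ Finset.univ \ {i}, A i j * v j) := by linarith
    rw [h, abs_neg]
  have h2 : |∑ j ∈ Finset.univ \ {i}, A i j * v j| ≤
      ∑ j ∈ Finset.univ \ {i}, |A i j * v j| := Finset.abs_sum_le_sum_abs _ _
  have h3 : ∑ j ∈ Finset.univ \ {i}, |A i j * v j| ≤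
      ∑ j ∈ Finset.univ \ {i}, |A i j| * |v i| := by
    refine Finset.sum_le_sum fun j _ => ?_
    rw [abs_mul]
    exact mul_le_mul_of_nonneg_left (hi j (Finset.mem_univ j)) (abs_nonneg _)
  rw [← Finset.sum_mul] at h3
  have hlt : (∑ j ∈ Finset.univ \ {i}, |A i j|) * |v i| < A i i * |v i| :=
    mul_lt_mul_of_pos_right (hdom i) hvi
  linarith

/-- A strictly row diagonally dominant real matrix with positive diagonal entries
has positive determinant. -/
theorem stmt_1 (N : ℕ) (A : Matrix (Fin N) (Fin N) ℝ)
    (hdiag : ∀ i, 0 < A i i)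
    (hdom : ∀ i, ∑ j ∈ Finset.univ \ {i}, |A i j| < A i i) :
    0 < A.det := by
  set B : ℝ → Matrix (Fin N) (Fin N) ℝ :=
    fun t => Matrix.of fun i j => if i = j then A i i else t * A i j with hB
  have hBdiag : ∀ t i, (B t) i i = A i i := fun t i => by simp [hB]
  have hBdom : ∀ t ∈ Set.Icc (0:ℝ) 1, ∀ i,
      ∑ j ∈ Finset.univ \ {i}, |(B t) i j| < (B t) i i := by
    rintro t ⟨ht0, ht1⟩ i
    have heq : ∑ j ∈ Finset.univ \ {i}, |(B t) i j|
        = t * ∑ j ∈ Finset.univ \ {i}, |A i j| := by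
      rw [Finset.mul_sum]
      refine Finset.sum_congr rfl fun j hj => ?_
      have hji : i ≠ j := fun h => by simp [h] at hj
      simp [hB, hji, abs_mul, abs_of_nonneg ht0]
    rw [heq, hBdiag]
    have hs : 0 ≤ ∑ j ∈ Finset.univ \ {i}, |A i j| :=
      Finset.sum_nonneg fun j _ => abs_nonneg _
    calc t * ∑ j ∈ Finset.univ \ {i}, |A i j|
        ≤ 1 * ∑ j ∈ Finset.univ \ {i}, |A i j| := by
          exact mul_le_mul_of_nonneg_right ht1 hs
      _ < A i i := by rw [one_mul]; exact hdom i
  have hne : ∀ t ∈ Set.Icc (0:ℝ) 1, (B t).det ≠ 0 := fun t ht =>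
    dd_det_ne_zero N (B t) (fun i => by rw [hBdiag]; exact hdiag i) (hBdom t ht)
  have hcont : Continuous fun t => (B t).det := by
    apply Continuous.matrix_det
    apply continuous_pi; intro i; apply continuous_pi; intro j
    by_cases h : i = j <;> simp [hB, h] <;> fun_prop
  have hB0 : (B 0).det = ∏ i, A i i := by
    have : B 0 = Matrix.diagonal fun i => A i i := by
      ext i j
      by_cases h : i = j <;> simp [hB, h, Matrix.diagonal]
    rw [this, Matrix.det_diagonal]
  have hB1 : B 1 = A := by
    ext i j
    by_cases h : i = j <;> simp [hB, h]
  have h0pos : 0 < (B 0).det := by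
    rw [hB0]; exact Finset.prod_pos fun i _ => hdiag i
  by_contra hle
  push_neg at hle
  have h1neg : (B 1).det < 0 := by
    rcases lt_or_eq_of_le (hB1 ▸ hle) with h | h
    · exact h
    · exact absurd h (hne 1 ⟨zero_le_one, le_refl 1⟩)
  have := intermediate_value_Icc' (zero_le_one (α := ℝ)) hcont.continuousOn
  have h0mem : (0:ℝ) ∈ Set.Icc ((B 1).det) ((B 0).det) := ⟨h1neg.le, h0pos.le⟩
  obtain ⟨t, ht, htz⟩ := this h0mem
  exact hne t ht htz
end

section
/- Let J be an N×N real matrix with J_ij = J_i < 0 for all j ≠ i, and let d_i = J_ii − J_i. If |d_i| < 1 for all i and Σ_i (−J_i)/(1 + d_i) < 1, then every eigenvalue ξ of J satisfies |ξ| < 1 (i.e., the spectral radius of J is less than 1). -/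
lemma aux_ineq_stmt7 (dd x y : ℝ) (hdd : |dd| < 1) (h1 : 1 ≤ x ^ 2 + y ^ 2) :
    (dd - x) * (1 + dd) ≤ (x - dd) ^ 2 + y ^ 2 := by
  rw [abs_lt] at hdd
  rcases le_or_gt (-1) x with hx | hx
  · nlinarith [mul_nonneg (by linarith : (0:ℝ) ≤ 1 - dd) (by linarith : (0:ℝ) ≤ 1 + x)]
  · nlinarith [mul_nonneg (by linarith : (0:ℝ) ≤ dd - x) (by linarith : (0:ℝ) ≤ -1 - x),
      sq_nonneg y]

/-- If `J i j = Jr i < 0` for all `j ≠ i`, `d i = J i i - Jr i` satisfies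
`|d i| < 1` for all `i`, and `∑ i, (-Jr i) / (1 + d i) < 1`, then every
(complex) eigenvalue of `J` has modulus strictly less than `1`. -/
theorem stmt_7 (N : ℕ) (J : Matrix (Fin N) (Fin N) ℝ) (Jr : Fin N → ℝ)
    (hoff : ∀ i j, j ≠ i → J i j = Jr i)
    (hneg : ∀ i, Jr i < 0)
    (d : Fin N → ℝ) (hd : ∀ i, d i = J i i - Jr i)
    (hdlt : ∀ i, |d i| < 1)
    (hsum : ∑ i, (-Jr i) / (1 + d i) < 1) :
    ∀ ξ : ℂ, ((J.map (Complex.ofReal)).charpoly).IsRoot ξ → ‖ξ‖ < 1 := by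
  classical
  intro ξ hroot
  set Jc := J.map (Complex.ofReal) with hJcdef
  have hdpos : ∀ i, 0 < 1 + d i := by
    intro i; have := abs_lt.mp (hdlt i); linarith [this.1]
  have hdet : (Matrix.scalar (Fin N) ξ - Jc).det = 0 := by
    have h := hroot
    rw [Polynomial.IsRoot, Matrix.charpoly, eval_det,
      Matrix.matPolyEquiv_charmatrix, Polynomial.eval_sub, Polynomial.eval_X,
      Polynomial.eval_C] at h
    exact h
  obtain ⟨v, hv0, hv⟩ := Matrix.exists_mulVec_eq_zero_iff.mpr hdet
  have heig : ∀ i, ξ * v i = ∑ j, Jc i j * v j := by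
    intro i
    have h := congrFun hv i
    rw [Matrix.sub_mulVec, Pi.sub_apply, Pi.zero_apply, sub_eq_zero] at h
    have h1 : (Matrix.scalar (Fin N) ξ).mulVec v i = ξ * v i := by
      simp [Matrix.scalar_apply, Matrix.mulVec_diagonal]
    rw [h1] at h
    rw [h]
    rfl
  set S : ℂ := ∑ j, v j with hSdef
  have hrow : ∀ i, (ξ - (d i : ℂ)) * v i = (Jr i : ℂ) * S := by
    intro i
    have h := heig i
    have hsplit : ∑ j, Jc i j * v j = (d i : ℂ) * v i + (Jr i : ℂ) * S := by
      have hterm : ∀ j, Jc i j * v j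
          = (if j = i then (d i : ℂ) * v j else 0) + (Jr i : ℂ) * v j := by
        intro j
        by_cases hj : j = i
        · subst hj
          have : J j j = d j + Jr j := by have := hd j; linarith
          simp [Jc, Matrix.map_apply, this]
          ring
        · simp [Jc, Matrix.map_apply, hoff i j hj, hj]
      rw [Finset.sum_congr rfl fun j _ => hterm j, Finset.sum_add_distrib,
        Finset.sum_ite_eq' Finset.univ i fun j => (d i : ℂ) * v j, ← Finset.mul_sum]
      simp [hSdef]
    rw [hsplit] at h
    linear_combination h
  by_cases hS : S = 0
  · obtain ⟨i, hvi⟩ := Function.ne_iff.mp hv0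
    have h0 : (ξ - (d i : ℂ)) * v i = 0 := by rw [hrow i, hS, mul_zero]
    have hξ : ξ = (d i : ℂ) := by
      rcases mul_eq_zero.mp h0 with h | h
      · exact sub_eq_zero.mp h
      · exact absurd h hvi
    rw [hξ]
    simpa using hdlt i
  · by_contra hc
    push_neg at hc
    have hnormsq : 1 ≤ ξ.re ^ 2 + ξ.im ^ 2 := by
      have h1 : (1:ℝ) ≤ ‖ξ‖ ^ 2 := by nlinarith [hc, norm_nonneg ξ]
      have h2 : ‖ξ‖ ^ 2 = ξ.re ^ 2 + ξ.im ^ 2 := by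
        rw [Complex.sq_norm, Complex.normSq_apply]; ring
      linarith
    have hne : ∀ i, ξ - (d i : ℂ) ≠ 0 := by
      intro i h0
      have h := hrow i
      rw [h0, zero_mul] at h
      have : (Jr i : ℂ) ≠ 0 := by
        exact_mod_cast (hneg i).ne
      exact (mul_ne_zero this hS) h.symm
    have hvi : ∀ i, v i = (Jr i : ℂ) * S / (ξ - (d i : ℂ)) := by
      intro i
      rw [eq_div_iff (hne i)]
      linear_combination hrow i
    have hSeq : S = (∑ i, (Jr i : ℂ) / (ξ - (d i : ℂ))) * S := by
      conv_lhs => rw [hSdef]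
      rw [Finset.sum_congr rfl fun i _ => hvi i, Finset.sum_mul]
      exact Finset.sum_congr rfl fun i _ => by ring
    have hone : (∑ i, (Jr i : ℂ) / (ξ - (d i : ℂ))) = 1 := by
      have hz : ((∑ i, (Jr i : ℂ) / (ξ - (d i : ℂ))) - 1) * S = 0 := by
        linear_combination -hSeq
      rcases mul_eq_zero.mp hz with h | h
      · exact sub_eq_zero.mp h
      · exact absurd h hS
    have hre : (∑ i, ((Jr i : ℂ) / (ξ - (d i : ℂ))).re) = 1 := by
      rw [← Complex.re_sum, hone, Complex.one_re]
    have hterm : ∀ i, ((Jr i : ℂ) / (ξ - (d i : ℂ))).re ≤ (-Jr i) / (1 + d i) := by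
      intro i
      have hnsq : 0 < Complex.normSq (ξ - (d i : ℂ)) := Complex.normSq_pos.mpr (hne i)
      have hnsq_eq : Complex.normSq (ξ - (d i : ℂ))
          = (ξ.re - d i) ^ 2 + ξ.im ^ 2 := by
        rw [Complex.normSq_apply]
        simp [Complex.sub_re, Complex.sub_im]
        ring
      have hrepr : ((Jr i : ℂ) / (ξ - (d i : ℂ))).re
          = Jr i * (ξ.re - d i) / Complex.normSq (ξ - (d i : ℂ)) := by
        rw [Complex.div_re]
        simp [Complex.sub_re, Complex.sub_im]
      rw [hrepr, div_le_div_iff₀ hnsq (hdpos i)]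
      have key : (d i - ξ.re) * (1 + d i) ≤ (ξ.re - d i) ^ 2 + ξ.im ^ 2 :=
        aux_ineq_stmt7 (d i) ξ.re ξ.im (hdlt i) hnormsq
      have hJpos : (0:ℝ) ≤ -Jr i := by linarith [hneg i]
      nlinarith [mul_le_mul_of_nonneg_left key hJpos, hnsq_eq]
    have hfin : ∑ i, ((Jr i : ℂ) / (ξ - (d i : ℂ))).re ≤ ∑ i, (-Jr i) / (1 + d i) :=
      Finset.sum_le_sum fun i _ => hterm i
    rw [hre] at hfin
    linarith
end
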